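/- arXiv:0806.0271 — 2 statements merged into one kernel-verified Lean document; each statement's English description precedes it below -/
import Mathlib

section
/- Let θ ∈ ℂ, α = 1/2 − θ, and let y : ℂ → ℂ be a holomorphic solution of y″ = 2y³ + t·y + α; set z(t) := y′(t) − y(t)² − t/2. Let W be a holomorphic solution on (ℂ∖{0})×ℂ of the HTW pair with parameter θ and coefficient functions y, z. Let D ⊆ ℂ∖{0} be open and g : D → ℂ holomorphic with g(ζ)² = i/(2ζ) on D. Define Z(ζ,t) := (1/√2)·[[1,−1],[1,1]]·[[g(ζ),0],[0,1/g(ζ)]]·W(−2ζ², t). Then Z satisfies the Flaschka–Newell pair on D×ℂ: ∂Z/∂ζ = (−4iζ²σ₃ + 4yζσ₁ − 2y′σ₂ − i(2y²+t)σ₃ − (α/ζ)σ₁)·Z and ∂Z/∂t = (−iζσ₃ + yσ₁)·Z, where σ₁ = [[0,1],[1,0]], σ₂ = [[0,−i],[i,0]], σ₃ = [[1,0],[0,−1]]. -/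
/-!
The Fabri-type map is a gauge transformation. Writing `μ = -2ζ²` and
`G(ζ) = (1/√2)·[[1,-1],[1,1]]·diag(g, g⁻¹)`, so that `Z = G(ζ)·W(μ(ζ), t)`, the product and chain
rules give `∂_ζ Z = (G' + μ'·G·A_μ)·G⁻¹·Z` and `∂_t Z = G·A_t·G⁻¹·Z`. Since `g ∼ ζ^{-1/2}`, i.e.
`2ζg² = i`, we have `g' = -g/(2ζ)` and `g⁻¹ = -2iζg`, and both gauge identities
`G' + μ'·G·A_μ = B_ζ·G` and `G·A_t = B_t·G` become polynomial identities in `g`, `ζ`, `y`, `y'`, `t`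
and `θ`, where `z = y' - y² - t/2` and `α = 1/2 - θ`. Here `A_μ`, `A_t` are the coefficient
matrices of the Harnad–Tracy–Widom pair and `B_ζ`, `B_t` those of the Flaschka–Newell pair.
-/

open Matrix Complex

noncomputable section

def σ₁ : Matrix (Fin 2) (Fin 2) ℂ := !![0, 1; 1, 0]
def σ₂ : Matrix (Fin 2) (Fin 2) ℂ := !![0, -Complex.I; Complex.I, 0]
def σ₃ : Matrix (Fin 2) (Fin 2) ℂ := !![1, 0; 0, -1]

open Filter Topology

section Calculus

variable {𝕜 : Type*} [NontriviallyNormedField 𝕜] {m n : Type*} [Fintype n]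

theorem hasDerivAt_mulVec {M : 𝕜 → Matrix m n 𝕜} {M' : Matrix m n 𝕜} {F : 𝕜 → n → 𝕜}
    {F' : n → 𝕜} {x : 𝕜} (hM : ∀ i j, HasDerivAt (fun w => M w i j) (M' i j) x)
    (hF : HasDerivAt F F' x) :
    HasDerivAt (fun w => M w *ᵥ F w) (M' *ᵥ F x + M x *ᵥ F') x := by
  refine hasDerivAt_pi.2 fun i => ?_
  simp only [Pi.add_apply, mulVec, dotProduct, ← Finset.sum_add_distrib]
  exact HasDerivAt.fun_sum fun j _ => (hM i j).mul (hasDerivAt_pi.1 hF j)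

theorem HasDerivAt.mulVec_const {F : 𝕜 → n → 𝕜} {F' : n → 𝕜} {x : 𝕜} (A : Matrix m n 𝕜)
    (hF : HasDerivAt F F' x) : HasDerivAt (fun w => A *ᵥ F w) (A *ᵥ F') x := by
  simpa using
    hasDerivAt_mulVec (M := fun _ => A) (M' := 0) (fun i j => hasDerivAt_const x (A i j)) hF

theorem deriv_apply_eq_of_hasDerivAt {ι : Type*} {F : 𝕜 → ι → 𝕜} {F' : ι → 𝕜} {x : 𝕜}
    (h : HasDerivAt F F' x) : (fun i => deriv (fun w => F w i) x) = F' :=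
  funext fun i => (hasDerivAt_pi.1 h i).deriv

theorem hasDerivAt_of_deriv_apply_eq {ι : Type*} {F : 𝕜 → ι → 𝕜} {F' : ι → 𝕜} {x : 𝕜}
    (hF : ∀ i, DifferentiableAt 𝕜 (fun w => F w i) x)
    (h : (fun i => deriv (fun w => F w i) x) = F') : HasDerivAt F F' x :=
  hasDerivAt_pi.2 fun i => (hF i).hasDerivAt.congr_deriv (congrFun h i)

theorem hasDerivAt_left_of_deriv_apply_eq {ι : Type*} {F : 𝕜 → 𝕜 → ι → 𝕜} {F' : ι → 𝕜}
    {a b : 𝕜} (hF : ∀ i, DifferentiableAt 𝕜 (fun p : 𝕜 × 𝕜 => F p.1 p.2 i) (a, b))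
    (h : (fun i => deriv (fun w => F w b i) a) = F') : HasDerivAt (fun w => F w b) F' a :=
  hasDerivAt_of_deriv_apply_eq (fun i => ((hF i).comp a
    (differentiableAt_id.prodMk (differentiableAt_const b) :
      DifferentiableAt 𝕜 (fun w : 𝕜 => (w, b)) a) :)) h

theorem hasDerivAt_right_of_deriv_apply_eq {ι : Type*} {F : 𝕜 → 𝕜 → ι → 𝕜} {F' : ι → 𝕜}
    {a b : 𝕜} (hF : ∀ i, DifferentiableAt 𝕜 (fun p : 𝕜 × 𝕜 => F p.1 p.2 i) (a, b))
    (h : (fun i => deriv (fun w => F a w i) b) = F') : HasDerivAt (fun w => F a w) F' b :=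
  hasDerivAt_of_deriv_apply_eq (fun i => ((hF i).comp b
    ((differentiableAt_const a).prodMk differentiableAt_id :
      DifferentiableAt 𝕜 (fun w : 𝕜 => (a, w)) b) :)) h

theorem hasDerivAt_of_sq_eq_div [CharZero 𝕜] {g : 𝕜 → 𝕜} {c ζ : 𝕜} (hc : c ≠ 0) (hζ : ζ ≠ 0)
    (hg : DifferentiableAt 𝕜 g ζ)
    (hsq : ∀ᶠ w in 𝓝 ζ, g w ^ 2 = c / w) : HasDerivAt g (-g ζ / (2 * ζ)) ζ := by
  have hgζ : g ζ ^ 2 * ζ = c := by rw [hsq.self_of_nhds, div_mul_cancel₀ _ hζ]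
  have hg0 : g ζ ≠ 0 := by rintro h; simp [h, hc.symm] at hgζ
  have hsq' : HasDerivAt (fun w => g w ^ 2) (-c / ζ ^ 2) ζ := by
    refine (hasDerivAt_inv hζ |>.const_mul c).congr_of_eventuallyEq ?_ |>.congr_deriv ?_
    · filter_upwards [hsq] with w hw using by rw [hw, div_eq_mul_inv]
    · ring
  have hchain := hg.hasDerivAt.fun_pow 2 |>.unique hsq'
  rw [← hgζ] at hchain
  have hfactor : g ζ * (deriv g ζ * (2 * ζ) + g ζ) = 0 := by
    field_simp at hchain
    linear_combination hchain
  refine hg.hasDerivAt.congr_deriv ?_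
  rw [eq_div_iff (by simpa using hζ)]
  linear_combination (mul_eq_zero.1 hfactor).resolve_left hg0

end Calculus

def htwMuMatrix (θ y z t μ : ℂ) : Matrix (Fin 2) (Fin 2) ℂ :=
  μ • !![0, 1; 0, 0] + !![-y, -(z + 2 * y ^ 2 + t); 1/2, y] + (1 / (2 * μ)) • !![θ, 0; z, -θ]

def htwTMatrix (y μ : ℂ) : Matrix (Fin 2) (Fin 2) ℂ :=
  -(μ • !![0, 1; 0, 0] + !![-y, 0; 1/2, y])

def fnZetaMatrix (α y y' t ζ : ℂ) : Matrix (Fin 2) (Fin 2) ℂ :=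
  (-4 * I * ζ ^ 2) • σ₃ + (4 * y * ζ) • σ₁ + (-2 * y') • σ₂ + (-(I * (2 * y ^ 2 + t))) • σ₃ +
    (-(α / ζ)) • σ₁

def fnTMatrix (y ζ : ℂ) : Matrix (Fin 2) (Fin 2) ℂ :=
  (-I * ζ) • σ₃ + y • σ₁

/-- The gauge of the theorem is `fabriGauge g g⁻¹`; keeping the two diagonal entries independent
makes the derivative of `w ↦ fabriGauge (a w) (b w)` again a `fabriGauge`. -/
def fabriGauge (a b : ℂ) : Matrix (Fin 2) (Fin 2) ℂ :=
  ((Real.sqrt 2 : ℂ))⁻¹ • (!![1, -1; 1, 1] * !![a, 0; 0, b])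

theorem hasDerivAt_fabriGauge {a b : ℂ → ℂ} {a' b' x : ℂ} (ha : HasDerivAt a a' x)
    (hb : HasDerivAt b b' x) (i j : Fin 2) :
    HasDerivAt (fun w => fabriGauge (a w) (b w) i j) (fabriGauge a' b' i j) x := by
  fin_cases i <;> fin_cases j <;> simp [fabriGauge]
  exacts [ha.const_mul _, (hb.const_mul _).neg, ha.const_mul _, hb.const_mul _]

theorem inv_eq_of_two_mul_mul_sq_eq_I {g ζ : ℂ} (hg : 2 * ζ * g ^ 2 = I) :
    g⁻¹ = -2 * I * ζ * g :=
  inv_eq_of_mul_eq_one_left (by linear_combination -I * hg - I_sq)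

theorem ne_zero_of_two_mul_mul_sq_eq_I {g ζ : ℂ} (hg : 2 * ζ * g ^ 2 = I) : ζ ≠ 0 := by
  rintro rfl
  exact I_ne_zero (by simpa using hg.symm)

theorem fabriGauge_mul_htwTMatrix {g ζ : ℂ} (y : ℂ) (hg : 2 * ζ * g ^ 2 = I) :
    fabriGauge g g⁻¹ * htwTMatrix y (-2 * ζ ^ 2) = fnTMatrix y ζ * fabriGauge g g⁻¹ := by
  have hζ := ne_zero_of_two_mul_mul_sq_eq_I hg
  rw [inv_eq_of_two_mul_mul_sq_eq_I hg]
  ext i j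
  fin_cases i <;> fin_cases j <;>
    simp [fabriGauge, htwTMatrix, fnTMatrix, σ₁, σ₃, Matrix.mul_apply] <;> field_simp <;>
    grind [I_sq]

theorem fabriGauge_gauge_htwMuMatrix {g ζ : ℂ} (θ y y' t : ℂ) (hg : 2 * ζ * g ^ 2 = I) :
    fabriGauge (-g / (2 * ζ)) (g⁻¹ / (2 * ζ)) +
        (-4 * ζ) • (fabriGauge g g⁻¹ * htwMuMatrix θ y (y' - y ^ 2 - t / 2) t (-2 * ζ ^ 2)) =
      fnZetaMatrix (1/2 - θ) y y' t ζ * fabriGauge g g⁻¹ := by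
  have hζ := ne_zero_of_two_mul_mul_sq_eq_I hg
  rw [inv_eq_of_two_mul_mul_sq_eq_I hg]
  ext i j
  fin_cases i <;> fin_cases j <;>
    simp [fabriGauge, htwMuMatrix, fnZetaMatrix, σ₁, σ₂, σ₃, Matrix.mul_apply] <;> field_simp <;>
    grind [I_sq]

theorem stmt_9_general (θ α : ℂ) (hα : α = 1/2 - θ)
    (y : ℂ → ℂ)
    (z : ℂ → ℂ) (hz : ∀ t : ℂ, z t = deriv y t - (y t)^2 - t/2)
    (W : ℂ → ℂ → Fin 2 → ℂ)
    (hWdiff : ∀ i, DifferentiableOn ℂ (fun p : ℂ × ℂ => W p.1 p.2 i) {p | p.1 ≠ 0})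
    (hWμ : ∀ μ : ℂ, μ ≠ 0 → ∀ t : ℂ,
      (fun i => deriv (fun m => W m t i) μ) =
        (μ • (!![0,1; 0,0] : Matrix (Fin 2) (Fin 2) ℂ) +
          !![-y t, -(z t + 2*(y t)^2 + t); 1/2, y t] +
          (1/(2*μ)) • !![θ, 0; z t, -θ]).mulVec (W μ t))
    (hWt : ∀ μ : ℂ, μ ≠ 0 → ∀ t : ℂ,
      (fun i => deriv (fun s => W μ s i) t) =
        (-(μ • (!![0,1; 0,0] : Matrix (Fin 2) (Fin 2) ℂ) +
          !![-y t, 0; 1/2, y t])).mulVec (W μ t))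
    (D : Set ℂ) (hD : IsOpen D) (hD0 : ∀ ζ ∈ D, ζ ≠ (0:ℂ))
    (g : ℂ → ℂ) (hg : DifferentiableOn ℂ g D)
    (hg2 : ∀ ζ ∈ D, (g ζ)^2 = Complex.I/(2*ζ))
    (Z : ℂ → ℂ → Fin 2 → ℂ)
    (hZ : ∀ ζ t : ℂ, Z ζ t =
      ((Real.sqrt 2 : ℂ))⁻¹ •
        ((!![1,-1; 1,1] : Matrix (Fin 2) (Fin 2) ℂ) *
          !![g ζ, 0; 0, (g ζ)⁻¹]).mulVec (W (-2*ζ^2) t)) :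
    ∀ ζ ∈ D, ∀ t : ℂ,
      ((fun i => deriv (fun w => Z w t i) ζ) =
        ((-4*Complex.I*ζ^2) • σ₃ + (4*(y t)*ζ) • σ₁ + (-2*deriv y t) • σ₂
          + (-(Complex.I*(2*(y t)^2 + t))) • σ₃ + (-(α/ζ)) • σ₁).mulVec (Z ζ t)) ∧
      ((fun i => deriv (fun s => Z ζ s i) t) =
        ((-Complex.I*ζ) • σ₃ + (y t) • σ₁).mulVec (Z ζ t)) := by
  intro ζ hζD t
  have hζ : ζ ≠ 0 := hD0 ζ hζD
  have hμ : -2 * ζ ^ 2 ≠ 0 := by simpa using hζ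
  have hgζ : 2 * ζ * g ζ ^ 2 = I := by rw [hg2 ζ hζD]; field_simp
  have hgd : HasDerivAt g (-g ζ / (2 * ζ)) ζ :=
    hasDerivAt_of_sq_eq_div (c := I / 2) (by simp) hζ (hg.differentiableAt (hD.mem_nhds hζD))
      (eventually_of_mem (hD.mem_nhds hζD) fun w hw => by rw [hg2 w hw]; ring)
  have hginv : HasDerivAt (fun w => (g w)⁻¹) ((g ζ)⁻¹ / (2 * ζ)) ζ := by
    have hg0 : g ζ ≠ 0 := by rintro h; simp [h, eq_comm] at hgζ
    exact (hgd.fun_inv hg0).congr_deriv (by field_simp)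
  have hWat : ∀ s i, DifferentiableAt ℂ (fun p : ℂ × ℂ => W p.1 p.2 i) (-2 * ζ ^ 2, s) :=
    fun _ i => (hWdiff i).differentiableAt ((isOpen_ne.preimage continuous_fst).mem_nhds hμ)
  have hWμ' : HasDerivAt (fun m => W m t)
      (htwMuMatrix θ (y t) (z t) t (-2 * ζ ^ 2) *ᵥ W (-2 * ζ ^ 2) t) (-2 * ζ ^ 2) :=
    hasDerivAt_left_of_deriv_apply_eq (hWat t) (hWμ _ hμ t)
  have hWt' : HasDerivAt (fun s => W (-2 * ζ ^ 2) s)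
      (htwTMatrix (y t) (-2 * ζ ^ 2) *ᵥ W (-2 * ζ ^ 2) t) t :=
    hasDerivAt_right_of_deriv_apply_eq (hWat t) (hWt _ hμ t)
  have hquad : HasDerivAt (fun w : ℂ => -2 * w ^ 2) (-4 * ζ) ζ :=
    ((hasDerivAt_pow 2 ζ).const_mul (-2 : ℂ)).congr_deriv (by ring)
  obtain rfl : Z = fun w s => fabriGauge (g w) (g w)⁻¹ *ᵥ W (-2 * w ^ 2) s :=
    funext₂ fun w s => by rw [hZ, fabriGauge, smul_mulVec]
  rw [hα]
  refine ⟨deriv_apply_eq_of_hasDerivAt ?_, deriv_apply_eq_of_hasDerivAt ?_⟩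
  · refine (hasDerivAt_mulVec (hasDerivAt_fabriGauge hgd hginv)
      (hWμ'.scomp ζ hquad)).congr_deriv ?_
    rw [Function.comp_apply, mulVec_smul, mulVec_mulVec, ← smul_mulVec, ← add_mulVec, hz,
      fabriGauge_gauge_htwMuMatrix θ _ _ _ hgζ, mulVec_mulVec]
    rfl
  · refine (hWt'.mulVec_const _).congr_deriv ?_
    rw [mulVec_mulVec, fabriGauge_mul_htwTMatrix _ hgζ, mulVec_mulVec]
    rfl

/-- The Fabri-type transformation `Z(ζ,t) = (1/√2)·[[1,−1],[1,1]]·diag(g(ζ),1/g(ζ))·W(−2ζ²,t)`,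
with `g(ζ)² = i/(2ζ)`, maps a solution `W` of the Harnad–Tracy–Widom pair with parameter `θ`
(where `z = y' − y² − t/2` and `y` solves `P₂` with `α = 1/2 − θ`) to a solution `Z` of the
Flaschka–Newell pair with parameter `α`. -/
theorem stmt_9 (θ α : ℂ) (hα : α = 1/2 - θ)
    (y : ℂ → ℂ) (hy : Differentiable ℂ y)
    (hP2 : ∀ t : ℂ, deriv (deriv y) t = 2*(y t)^3 + t*(y t) + α)
    (z : ℂ → ℂ) (hz : ∀ t : ℂ, z t = deriv y t - (y t)^2 - t/2)
    (W : ℂ → ℂ → Fin 2 → ℂ)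
    (hWdiff : ∀ i, DifferentiableOn ℂ (fun p : ℂ × ℂ => W p.1 p.2 i) {p | p.1 ≠ 0})
    (hWμ : ∀ μ : ℂ, μ ≠ 0 → ∀ t : ℂ,
      (fun i => deriv (fun m => W m t i) μ) =
        (μ • (!![0,1; 0,0] : Matrix (Fin 2) (Fin 2) ℂ) +
          !![-y t, -(z t + 2*(y t)^2 + t); 1/2, y t] +
          (1/(2*μ)) • !![θ, 0; z t, -θ]).mulVec (W μ t))
    (hWt : ∀ μ : ℂ, μ ≠ 0 → ∀ t : ℂ,
      (fun i => deriv (fun s => W μ s i) t) =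
        (-(μ • (!![0,1; 0,0] : Matrix (Fin 2) (Fin 2) ℂ) +
          !![-y t, 0; 1/2, y t])).mulVec (W μ t))
    (D : Set ℂ) (hD : IsOpen D) (hD0 : ∀ ζ ∈ D, ζ ≠ (0:ℂ))
    (g : ℂ → ℂ) (hg : DifferentiableOn ℂ g D)
    (hg2 : ∀ ζ ∈ D, (g ζ)^2 = Complex.I/(2*ζ))
    (Z : ℂ → ℂ → Fin 2 → ℂ)
    (hZ : ∀ ζ t : ℂ, Z ζ t =
      ((Real.sqrt 2 : ℂ))⁻¹ •
        ((!![1,-1; 1,1] : Matrix (Fin 2) (Fin 2) ℂ) *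
          !![g ζ, 0; 0, (g ζ)⁻¹]).mulVec (W (-2*ζ^2) t)) :
    ∀ ζ ∈ D, ∀ t : ℂ,
      ((fun i => deriv (fun w => Z w t i) ζ) =
        ((-4*Complex.I*ζ^2) • σ₃ + (4*(y t)*ζ) • σ₁ + (-2*deriv y t) • σ₂
          + (-(Complex.I*(2*(y t)^2 + t))) • σ₃ + (-(α/ζ)) • σ₁).mulVec (Z ζ t)) ∧
      ((fun i => deriv (fun s => Z ζ s i) t) =
        ((-Complex.I*ζ) • σ₃ + (y t) • σ₁).mulVec (Z ζ t)) :=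
  stmt_9_general θ α hα y z hz W hWdiff hWμ hWt D hD hD0 g hg hg2 Z hZ
end
end

section
/- Let θ ∈ ℂ, α = 1/2 − θ, and let u, y, z : ℂ → ℂ be holomorphic with u(t) ≠ 0, u′ = −yu, y′ = y² + z + t/2, and z′ = −2yz − θ for all t. Let Ω ⊆ ℂ² be open with λ ≠ y(t) for all (λ,t) ∈ Ω, let Y = (Y₁,Y₂) : Ω → ℂ² be a holomorphic solution of the Jimbo–Miwa pair JM₂, and let s : Ω → ℂ be holomorphic with s(λ,t)² = u(t)·(λ − y(t)) on Ω. Define V := Y₁/s. Then on Ω: ∂²V/∂λ² = (3/(4(λ−y)²) − y′/(λ−y) + (y′)² + λ⁴ − y⁴ + t(λ² − y²) + 2α(λ−y))·V and ∂V/∂t = (1/(2(λ−y)))·∂V/∂λ + (1/(4(λ−y)²))·V, where y′ = y² + z + t/2; i.e. V satisfies the scalar Garnier pair G₂ for the second Painlevé equation with parameter α = 1/2 − θ. -/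
/-!
Put `d = λ - y`, so that `s² = u d`, and set `V = Y₁ / s`, `W = s Y₂`. Since `s_λ = s / (2d)`, the
λ-equation of `JM₂` becomes the trace-free system `V_λ = a V + W`, `W_λ = b V - a W` with
`a = λ² + z + t/2 - 1/(2d)` and `b = -2(zλ + yz + θ) d`. Hence `V_λλ = (a_λ + a² + b) V`, and
`a_λ + a² + b` is the Garnier potential once `z + t/2 = y' - y²`. In `t`, `u' = -yu` and
`y' = y² + z + t/2` give `s_t`, and then `V_t = ((λ² + z + t/2) V + W) / (2d)`, which is
`(V_λ + V / (2d)) / (2d)`.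
-/

open Matrix Filter Topology

section Calculus

variable {𝕜 : Type*} [NontriviallyNormedField 𝕜]

theorem DifferentiableOn.differentiableAt_comp_mk_left {E F G : Type*}
    [NormedAddCommGroup E] [NormedSpace 𝕜 E] [NormedAddCommGroup F] [NormedSpace 𝕜 F]
    [NormedAddCommGroup G] [NormedSpace 𝕜 G] {f : E × F → G} {s : Set (E × F)}
    (hf : DifferentiableOn 𝕜 f s) (hs : IsOpen s) {x : E} {y : F} (h : (x, y) ∈ s) :
    DifferentiableAt 𝕜 (fun x' => f (x', y)) x :=
  (hf.differentiableAt (hs.mem_nhds h)).comp x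
    (differentiableAt_id.prodMk (differentiableAt_const y))

theorem DifferentiableOn.differentiableAt_comp_mk_right {E F G : Type*}
    [NormedAddCommGroup E] [NormedSpace 𝕜 E] [NormedAddCommGroup F] [NormedSpace 𝕜 F]
    [NormedAddCommGroup G] [NormedSpace 𝕜 G] {f : E × F → G} {s : Set (E × F)}
    (hf : DifferentiableOn 𝕜 f s) (hs : IsOpen s) {x : E} {y : F} (h : (x, y) ∈ s) :
    DifferentiableAt 𝕜 (fun y' => f (x, y')) y :=
  (hf.differentiableAt (hs.mem_nhds h)).comp y
    ((differentiableAt_const x).prodMk differentiableAt_id)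

theorem hasDerivAt_of_sq_eventuallyEq [NeZero (2 : 𝕜)] {f g : 𝕜 → 𝕜} {g' x : 𝕜}
    (hf : DifferentiableAt 𝕜 f x) (hfx : f x ≠ 0) (hfg : (fun w => f w ^ 2) =ᶠ[𝓝 x] g)
    (hg : HasDerivAt g g' x) : HasDerivAt f (g' / (2 * f x)) x := by
  have hg' : g' = 2 * f x * deriv f x := by
    simpa using hg.unique ((hf.hasDerivAt.pow 2).congr_of_eventuallyEq hfg.symm)
  refine hf.hasDerivAt.congr_deriv ?_
  rw [hg', mul_div_cancel_left₀ _ (mul_ne_zero two_ne_zero hfx)]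

theorem hasDerivAt_deriv_of_traceFree_system {V W a b : 𝕜 → 𝕜} {a' x : 𝕜}
    (hV : ∀ᶠ w in 𝓝 x, HasDerivAt V (a w * V w + W w) w) (ha : HasDerivAt a a' x)
    (hW : HasDerivAt W (b x * V x - a x * W x) x) :
    HasDerivAt (deriv V) ((a' + a x ^ 2 + b x) * V x) x := by
  have hV' : deriv V =ᶠ[𝓝 x] fun w => a w * V w + W w :=
    hV.mono fun _ hw => hw.deriv
  refine (((ha.mul hV.self_of_nhds).add hW).congr_of_eventuallyEq hV').congr_deriv ?_
  ring

end Calculus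

noncomputable def jimboMiwaLambdaMatrix (θ u y z t l : ℂ) : Matrix (Fin 2) (Fin 2) ℂ :=
  l ^ 2 • !![1, 0; 0, -1] + l • !![0, u; -2 * z / u, 0] +
    !![z + t / 2, -u * y; -2 * (y * z + θ) / u, -z - t / 2]

noncomputable def jimboMiwaTimeMatrix (u z l : ℂ) : Matrix (Fin 2) (Fin 2) ℂ :=
  (l / 2) • !![1, 0; 0, -1] + (1 / 2 : ℂ) • !![0, u; -2 * z / u, 0]

section JimboMiwa

variable {θ u y z t l : ℂ}

theorem jimboMiwaLambdaMatrix_mulVec_zero (v : Fin 2 → ℂ) :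
    (jimboMiwaLambdaMatrix θ u y z t l *ᵥ v) 0 =
      (l ^ 2 + z + t / 2) * v 0 + u * (l - y) * v 1 := by
  simp [jimboMiwaLambdaMatrix, mulVec, dotProduct, Fin.sum_univ_two]
  ring

theorem jimboMiwaLambdaMatrix_mulVec_one (v : Fin 2 → ℂ) :
    (jimboMiwaLambdaMatrix θ u y z t l *ᵥ v) 1 =
      -2 * (z * l + y * z + θ) / u * v 0 - (l ^ 2 + z + t / 2) * v 1 := by
  simp [jimboMiwaLambdaMatrix, mulVec, dotProduct, Fin.sum_univ_two]
  ring

theorem jimboMiwaTimeMatrix_mulVec_zero (v : Fin 2 → ℂ) :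
    (jimboMiwaTimeMatrix u z l *ᵥ v) 0 = l / 2 * v 0 + u / 2 * v 1 := by
  simp [jimboMiwaTimeMatrix, mulVec, dotProduct, Fin.sum_univ_two, div_eq_inv_mul]

end JimboMiwa

section LambdaEquation

variable {θ u y z t : ℂ} {U : Set ℂ} {f g σ : ℂ → ℂ}

theorem ne_zero_of_sq_eq_mul_sub (hu : u ≠ 0) (hyU : ∀ w ∈ U, w ≠ y)
    (hσ2 : ∀ w ∈ U, σ w ^ 2 = u * (w - y)) {w : ℂ} (hw : w ∈ U) : σ w ≠ 0 :=
  ne_zero_pow two_ne_zero <| (hσ2 w hw).symm ▸ mul_ne_zero hu (sub_ne_zero.2 (hyU w hw))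

theorem hasDerivAt_of_sq_eq_mul_sub (hu : u ≠ 0) (hU : IsOpen U) (hyU : ∀ w ∈ U, w ≠ y)
    (hσ : ∀ w ∈ U, DifferentiableAt ℂ σ w) (hσ2 : ∀ w ∈ U, σ w ^ 2 = u * (w - y))
    {w : ℂ} (hw : w ∈ U) : HasDerivAt σ (u / (2 * σ w)) w := by
  refine (hasDerivAt_of_sq_eventuallyEq (hσ w hw) (ne_zero_of_sq_eq_mul_sub hu hyU hσ2 hw)
    (eventually_of_mem (hU.mem_nhds hw) hσ2)
    (((hasDerivAt_id w).sub_const y).const_mul u)).congr_deriv ?_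
  simp

variable (hu : u ≠ 0) (hU : IsOpen U) (hyU : ∀ w ∈ U, w ≠ y)
    (hσ : ∀ w ∈ U, DifferentiableAt ℂ σ w) (hσ2 : ∀ w ∈ U, σ w ^ 2 = u * (w - y))
include hu hU hyU hσ hσ2

theorem hasDerivAt_div_of_jimboMiwa_lambda
    (hf : ∀ w ∈ U, HasDerivAt f ((w ^ 2 + z + t / 2) * f w + u * (w - y) * g w) w)
    {w : ℂ} (hw : w ∈ U) :
    HasDerivAt (fun w => f w / σ w)
      ((w ^ 2 + z + t / 2 - 1 / (2 * (w - y))) * (f w / σ w) + σ w * g w) w := by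
  have hσw := ne_zero_of_sq_eq_mul_sub hu hyU hσ2 hw
  have hwy := sub_ne_zero.2 (hyU w hw)
  refine ((hf w hw).div (hasDerivAt_of_sq_eq_mul_sub hu hU hyU hσ hσ2 hw) hσw).congr_deriv ?_
  have hu' : u = σ w ^ 2 / (w - y) := by rw [hσ2 w hw]; field_simp
  rw [hu']
  field_simp
  ring

theorem hasDerivAt_mul_of_jimboMiwa_lambda
    (hg : ∀ w ∈ U,
      HasDerivAt g (-2 * (z * w + y * z + θ) / u * f w - (w ^ 2 + z + t / 2) * g w) w)
    {w : ℂ} (hw : w ∈ U) :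
    HasDerivAt (fun w => σ w * g w)
      (-2 * (z * w + y * z + θ) * (w - y) * (f w / σ w)
        - (w ^ 2 + z + t / 2 - 1 / (2 * (w - y))) * (σ w * g w)) w := by
  have hσw := ne_zero_of_sq_eq_mul_sub hu hyU hσ2 hw
  have hwy := sub_ne_zero.2 (hyU w hw)
  refine ((hasDerivAt_of_sq_eq_mul_sub hu hU hyU hσ hσ2 hw).mul (hg w hw)).congr_deriv ?_
  have hu' : u = σ w ^ 2 / (w - y) := by rw [hσ2 w hw]; field_simp
  rw [hu']
  field_simp
  ring

theorem hasDerivAt_deriv_div_of_jimboMiwa_lambda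
    (hf : ∀ w ∈ U, HasDerivAt f ((w ^ 2 + z + t / 2) * f w + u * (w - y) * g w) w)
    (hg : ∀ w ∈ U,
      HasDerivAt g (-2 * (z * w + y * z + θ) / u * f w - (w ^ 2 + z + t / 2) * g w) w)
    {l : ℂ} (hl : l ∈ U) :
    HasDerivAt (deriv fun w => f w / σ w)
      ((3 / (4 * (l - y) ^ 2) - (y ^ 2 + z + t / 2) / (l - y) + (y ^ 2 + z + t / 2) ^ 2
        + l ^ 4 - y ^ 4 + t * (l ^ 2 - y ^ 2) + 2 * (1 / 2 - θ) * (l - y)) * (f l / σ l)) l := by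
  have hly := sub_ne_zero.2 (hyU l hl)
  have ha : HasDerivAt (fun w => w ^ 2 + z + t / 2 - 1 / (2 * (w - y)))
      (2 * l + 1 / (2 * (l - y) ^ 2)) l := by
    refine ((((hasDerivAt_pow 2 l).add_const z).add_const (t / 2)).sub
      ((hasDerivAt_const l 1).div (((hasDerivAt_id' l).sub_const y).const_mul 2)
        (mul_ne_zero two_ne_zero hly))).congr_deriv ?_
    field_simp
    ring
  refine (hasDerivAt_deriv_of_traceFree_system (W := fun w => σ w * g w)
    (b := fun w => -2 * (z * w + y * z + θ) * (w - y))
    (eventually_of_mem (hU.mem_nhds hl) fun w hw =>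
      hasDerivAt_div_of_jimboMiwa_lambda hu hU hyU hσ hσ2 hf hw) ha
    (hasDerivAt_mul_of_jimboMiwa_lambda hu hU hyU hσ hσ2 hg hl)).congr_deriv ?_
  field_simp
  ring

end LambdaEquation

theorem hasDerivAt_div_of_jimboMiwa_time {l t g : ℂ} {u y z f σ : ℂ → ℂ}
    (hu : HasDerivAt u (-y t * u t) t) (hu0 : u t ≠ 0)
    (hy : HasDerivAt y (y t ^ 2 + z t + t / 2) t) (hly : l ≠ y t)
    (hf : HasDerivAt f (l / 2 * f t + u t / 2 * g) t)
    (hσ : DifferentiableAt ℂ σ t)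
    (hσ2 : (fun τ => σ τ ^ 2) =ᶠ[𝓝 t] fun τ => u τ * (l - y τ)) :
    HasDerivAt (fun τ => f τ / σ τ)
      (1 / (2 * (l - y t)) * ((l ^ 2 + z t + t / 2 - 1 / (2 * (l - y t))) * (f t / σ t) + σ t * g)
        + 1 / (4 * (l - y t) ^ 2) * (f t / σ t)) t := by
  have hly' := sub_ne_zero.2 hly
  have hσt : σ t ≠ 0 := ne_zero_pow two_ne_zero <| hσ2.eq_of_nhds ▸ mul_ne_zero hu0 hly'
  refine (hf.div (hasDerivAt_of_sq_eventuallyEq hσ hσt hσ2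
    (hu.mul ((hasDerivAt_const t l).sub hy))) hσt).congr_deriv ?_
  have hu' : u t = σ t ^ 2 / (l - y t) := by rw [hσ2.eq_of_nhds]; field_simp
  rw [hu']
  field_simp
  ring

theorem stmt_18_general (θ α : ℂ) (hα : α = 1/2 - θ)
    (u y z : ℂ → ℂ)
    (hu : Differentiable ℂ u) (hy : Differentiable ℂ y)
    (hu0 : ∀ t : ℂ, u t ≠ 0)
    (hu' : ∀ t : ℂ, deriv u t = -(y t) * u t)
    (hy' : ∀ t : ℂ, deriv y t = (y t)^2 + z t + t/2)
    (Ω : Set (ℂ × ℂ)) (hΩ : IsOpen Ω)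
    (hne : ∀ p ∈ Ω, p.1 ≠ y p.2)
    (Y : ℂ → ℂ → Fin 2 → ℂ)
    (hYdiff : ∀ i, DifferentiableOn ℂ (fun p : ℂ × ℂ => Y p.1 p.2 i) Ω)
    (hYlam : ∀ l t : ℂ, (l, t) ∈ Ω →
      (fun i => deriv (fun w => Y w t i) l) =
        (l^2 • (!![1,0; 0,-1] : Matrix (Fin 2) (Fin 2) ℂ) +
          l • !![0, u t; -2*z t/u t, 0] +
          !![z t + t/2, -(u t)*(y t);
            -2*((y t)*(z t) + θ)/u t, -(z t) - t/2]).mulVec (Y l t))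
    (hYt : ∀ l t : ℂ, (l, t) ∈ Ω →
      (fun i => deriv (fun s => Y l s i) t) =
        ((l/2) • (!![1,0; 0,-1] : Matrix (Fin 2) (Fin 2) ℂ) +
          (1/2 : ℂ) • !![0, u t; -2*z t/u t, 0]).mulVec (Y l t))
    (s : ℂ → ℂ → ℂ)
    (hs : DifferentiableOn ℂ (fun p : ℂ × ℂ => s p.1 p.2) Ω)
    (hs2 : ∀ l t : ℂ, (l, t) ∈ Ω → (s l t)^2 = u t * (l - y t))
    (V : ℂ → ℂ → ℂ)
    (hV : ∀ l t : ℂ, V l t = Y l t 0 / s l t) :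
    ∀ l t : ℂ, (l, t) ∈ Ω →
      (deriv (fun w => deriv (fun w' => V w' t) w) l =
        (3/(4*(l - y t)^2) - deriv y t/(l - y t) + (deriv y t)^2
          + l^4 - (y t)^4 + t*(l^2 - (y t)^2) + 2*α*(l - y t)) * V l t) ∧
      (deriv (fun s' => V l s') t =
        (1/(2*(l - y t))) * deriv (fun w => V w t) l + (1/(4*(l - y t)^2)) * V l t) := by
  obtain rfl : V = fun l t => Y l t 0 / s l t := funext₂ hV
  subst hα
  intro l t h
  have hU : IsOpen {w | (w, t) ∈ Ω} := hΩ.preimage (Continuous.prodMk_left t)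
  have hyU (w : ℂ) (hw : (w, t) ∈ Ω) : w ≠ y t := hne (w, t) hw
  have hσ (w : ℂ) (hw : (w, t) ∈ Ω) := hs.differentiableAt_comp_mk_left hΩ hw
  have hσ2 (w : ℂ) (hw : (w, t) ∈ Ω) := hs2 w t hw
  have hY (i : Fin 2) {w : ℂ} (hw : (w, t) ∈ Ω) : HasDerivAt (fun w => Y w t i)
      ((jimboMiwaLambdaMatrix θ (u t) (y t) (z t) t w *ᵥ Y w t) i) w :=
    ((hYdiff i).differentiableAt_comp_mk_left hΩ hw).hasDerivAt.congr_deriv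
      (congrFun (hYlam w t hw) i)
  have hf (w : ℂ) (hw : (w, t) ∈ Ω) :=
    (hY 0 hw).congr_deriv (jimboMiwaLambdaMatrix_mulVec_zero _)
  have hg (w : ℂ) (hw : (w, t) ∈ Ω) :=
    (hY 1 hw).congr_deriv (jimboMiwaLambdaMatrix_mulVec_one _)
  have hYt₀ : HasDerivAt (fun τ => Y l τ 0) (l / 2 * Y l t 0 + u t / 2 * Y l t 1) t :=
    (((hYdiff 0).differentiableAt_comp_mk_right hΩ h).hasDerivAt.congr_deriv
      (congrFun (hYt l t h) 0)).congr_deriv (jimboMiwaTimeMatrix_mulVec_zero _)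
  have hs2t : (fun τ => s l τ ^ 2) =ᶠ[𝓝 t] fun τ => u τ * (l - y τ) :=
    eventually_of_mem ((hΩ.preimage (Continuous.prodMk_right l)).mem_nhds h) (hs2 l)
  refine ⟨?_, ?_⟩
  · rw [hy' t]
    exact (hasDerivAt_deriv_div_of_jimboMiwa_lambda (hu0 t) hU hyU hσ hσ2 hf hg h).deriv
  · rw [(hasDerivAt_div_of_jimboMiwa_lambda (hu0 t) hU hyU hσ hσ2 hf h).deriv]
    exact (hasDerivAt_div_of_jimboMiwa_time ((hu t).hasDerivAt.congr_deriv (hu' t)) (hu0 t)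
      ((hy t).hasDerivAt.congr_deriv (hy' t)) (hyU l h) hYt₀
      (hs.differentiableAt_comp_mk_right hΩ h) hs2t).deriv

/-- If `Y` solves the Jimbo–Miwa pair `JM₂` on an open set `Ω` avoiding `λ = y(t)`,
with `u' = −yu`, `y' = y² + z + t/2`, `z' = −2yz − θ`, and `s² = u(λ − y(t))`, then
`V := Y₁/s` solves the scalar Garnier pair `G₂` for the second Painlevé equation
with parameter `α = 1/2 − θ`. -/
theorem stmt_18 (θ α : ℂ) (hα : α = 1/2 - θ)
    (u y z : ℂ → ℂ)
    (hu : Differentiable ℂ u) (hy : Differentiable ℂ y) (hz : Differentiable ℂ z)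
    (hu0 : ∀ t : ℂ, u t ≠ 0)
    (hu' : ∀ t : ℂ, deriv u t = -(y t) * u t)
    (hy' : ∀ t : ℂ, deriv y t = (y t)^2 + z t + t/2)
    (hz' : ∀ t : ℂ, deriv z t = -2*(y t)*(z t) - θ)
    (Ω : Set (ℂ × ℂ)) (hΩ : IsOpen Ω)
    (hne : ∀ p ∈ Ω, p.1 ≠ y p.2)
    (Y : ℂ → ℂ → Fin 2 → ℂ)
    (hYdiff : ∀ i, DifferentiableOn ℂ (fun p : ℂ × ℂ => Y p.1 p.2 i) Ω)
    (hYlam : ∀ l t : ℂ, (l, t) ∈ Ω →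
      (fun i => deriv (fun w => Y w t i) l) =
        (l^2 • (!![1,0; 0,-1] : Matrix (Fin 2) (Fin 2) ℂ) +
          l • !![0, u t; -2*z t/u t, 0] +
          !![z t + t/2, -(u t)*(y t);
            -2*((y t)*(z t) + θ)/u t, -(z t) - t/2]).mulVec (Y l t))
    (hYt : ∀ l t : ℂ, (l, t) ∈ Ω →
      (fun i => deriv (fun s => Y l s i) t) =
        ((l/2) • (!![1,0; 0,-1] : Matrix (Fin 2) (Fin 2) ℂ) +
          (1/2 : ℂ) • !![0, u t; -2*z t/u t, 0]).mulVec (Y l t))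
    (s : ℂ → ℂ → ℂ)
    (hs : DifferentiableOn ℂ (fun p : ℂ × ℂ => s p.1 p.2) Ω)
    (hs2 : ∀ l t : ℂ, (l, t) ∈ Ω → (s l t)^2 = u t * (l - y t))
    (V : ℂ → ℂ → ℂ)
    (hV : ∀ l t : ℂ, V l t = Y l t 0 / s l t) :
    ∀ l t : ℂ, (l, t) ∈ Ω →
      (deriv (fun w => deriv (fun w' => V w' t) w) l =
        (3/(4*(l - y t)^2) - deriv y t/(l - y t) + (deriv y t)^2
          + l^4 - (y t)^4 + t*(l^2 - (y t)^2) + 2*α*(l - y t)) * V l t) ∧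
      (deriv (fun s' => V l s') t =
        (1/(2*(l - y t))) * deriv (fun w => V w t) l + (1/(4*(l - y t)^2)) * V l t) :=
  stmt_18_general θ α hα u y z hu hy hu0 hu' hy' Ω hΩ hne Y hYdiff hYlam hYt s hs hs2 V hV
end
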